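/- Let d ≥ 1 be an integer. There is a constant c_d < ∞, depending only on d, such that for all R > 0, all x ∈ ℝ^d with |x| = R, and all a, b > 0: ∫_{B_{R/2}(0)} q_a(x − y) · q_b(y − x) dy ≤ c_d · R^{−d}, where B_{R/2}(0) is the open ball of radius R/2 about the origin in ℝ^d. -/

import Mathlib

open MeasureTheory

/-- The heat kernel `q_t(x) = (4πt)^{−d/2} exp(−|x|²/(4t))` on `ℝ^d`. -/
noncomputable def heatKernel (d : ℕ) (t : ℝ) (x : EuclideanSpace ℝ (Fin d)) : ℝ :=
  (4 * Real.pi * t) ^ (-(d : ℝ) / 2) * Real.exp (-‖x‖ ^ 2 / (4 * t))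

lemma heatKernel_nonneg (d : ℕ) {t : ℝ} (ht : 0 < t) (x : EuclideanSpace ℝ (Fin d)) :
    0 ≤ heatKernel d t x := by
  have hπ : 0 < Real.pi := Real.pi_pos
  unfold heatKernel
  positivity

lemma rpow_half_mul_exp_neg_le (d : ℕ) {s : ℝ} (hs : 0 < s) :
    s ^ ((d : ℝ) / 2) * Real.exp (-s) ≤ (d.factorial : ℝ) + 1 := by
  have h1 : s ^ ((d : ℝ) / 2) ≤ s ^ d + 1 := by
    rcases le_total s 1 with h | h
    · have := Real.rpow_le_one hs.le h (by positivity : (0:ℝ) ≤ (d : ℝ) / 2)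
      nlinarith [pow_nonneg hs.le d]
    · have h2 : s ^ ((d : ℝ) / 2) ≤ s ^ (d : ℝ) :=
        Real.rpow_le_rpow_of_exponent_le h (by linarith [Nat.cast_nonneg (α := ℝ) d])
      rw [Real.rpow_natCast] at h2
      linarith
  have h2 : s ^ d ≤ (d.factorial : ℝ) * Real.exp s := by
    have := Real.pow_div_factorial_le_exp s hs.le d
    have hfac : (0:ℝ) < d.factorial := by exact_mod_cast d.factorial_pos
    rw [div_le_iff₀ hfac] at this
    linarith
  have h3 : Real.exp (-s) ≤ 1 := Real.exp_le_one_iff.2 (by linarith)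
  have h4 : 0 < Real.exp (-s) := Real.exp_pos _
  calc s ^ ((d : ℝ) / 2) * Real.exp (-s) ≤ (s ^ d + 1) * Real.exp (-s) := by
        exact mul_le_mul_of_nonneg_right h1 h4.le
    _ ≤ ((d.factorial : ℝ) * Real.exp s + 1) * Real.exp (-s) := by
        exact mul_le_mul_of_nonneg_right (by linarith) h4.le
    _ = (d.factorial : ℝ) + Real.exp (-s) := by
        rw [add_mul, mul_assoc, ← Real.exp_add]
        simp
    _ ≤ (d.factorial : ℝ) + 1 := by linarith

/-- The key supremum bound: `σ^{-d/2} e^{-R²/(16σ)} ≤ 16^{d/2}(d!+1) R^{-d}`. -/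
lemma sigma_bound (d : ℕ) {σ R : ℝ} (hσ : 0 < σ) (hR : 0 < R) :
    σ ^ (-(d : ℝ) / 2) * Real.exp (-(R ^ 2) / (16 * σ)) ≤
      (16 : ℝ) ^ ((d : ℝ) / 2) * ((d.factorial : ℝ) + 1) * R ^ (-(d : ℝ)) := by
  set s : ℝ := R ^ 2 / (16 * σ) with hs_def
  have hs : 0 < s := by positivity
  have key : σ ^ (-(d : ℝ) / 2) =
      (16 : ℝ) ^ ((d : ℝ) / 2) * s ^ ((d : ℝ) / 2) * R ^ (-(d : ℝ)) := by
    have h16 : (0:ℝ) ≤ 16 := by norm_num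
    have : (16 : ℝ) ^ ((d : ℝ) / 2) * s ^ ((d : ℝ) / 2) = (16 * s) ^ ((d : ℝ) / 2) :=
      (Real.mul_rpow h16 hs.le).symm
    rw [this]
    have h16s : 16 * s = R ^ 2 / σ := by
      field_simp [hs_def]
      rw [hs_def]; field_simp
    rw [h16s, Real.div_rpow (by positivity) hσ.le]
    have hR2 : (R ^ 2) ^ ((d : ℝ) / 2) = R ^ (d : ℝ) := by
      rw [← Real.rpow_natCast R 2, ← Real.rpow_mul hR.le]
      congr 1
      ring
    rw [hR2, Real.rpow_neg hR.le, neg_div, Real.rpow_neg hσ.le]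
    field_simp
  rw [key, neg_div]
  calc (16:ℝ) ^ ((d : ℝ) / 2) * s ^ ((d : ℝ) / 2) * R ^ (-(d : ℝ)) * Real.exp (-s)
      = (16:ℝ) ^ ((d : ℝ) / 2) * (s ^ ((d : ℝ) / 2) * Real.exp (-s)) * R ^ (-(d : ℝ)) := by
        ring
    _ ≤ (16:ℝ) ^ ((d : ℝ) / 2) * ((d.factorial : ℝ) + 1) * R ^ (-(d : ℝ)) := by
        have := rpow_half_mul_exp_neg_le d hs
        have h1 : (0:ℝ) ≤ (16:ℝ) ^ ((d : ℝ) / 2) := by positivity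
        have h2 : (0:ℝ) ≤ R ^ (-(d : ℝ)) := by positivity
        exact mul_le_mul_of_nonneg_right (mul_le_mul_of_nonneg_left this h1) h2

/-- Pointwise bound for the first heat kernel factor off the ball. -/
lemma heatKernel_le (d : ℕ) {a R : ℝ} (ha : 0 < a) (hR : 0 < R)
    {z : EuclideanSpace ℝ (Fin d)} (hz : R / 2 ≤ ‖z‖) :
    heatKernel d a z ≤
      (4 * Real.pi) ^ (-(d : ℝ) / 2) * (16 : ℝ) ^ ((d : ℝ) / 2) *
        ((d.factorial : ℝ) + 1) * R ^ (-(d : ℝ)) := by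
  have hπ : 0 < Real.pi := Real.pi_pos
  have hexp : Real.exp (-‖z‖ ^ 2 / (4 * a)) ≤ Real.exp (-(R ^ 2) / (16 * a)) := by
    apply Real.exp_le_exp.2
    rw [div_le_div_iff₀ (by positivity) (by positivity)]
    have h1 : (R / 2) ^ 2 ≤ ‖z‖ ^ 2 := by
      apply sq_le_sq' _ hz
      nlinarith [norm_nonneg z]
    nlinarith
  have hsplit : (4 * Real.pi * a) ^ (-(d : ℝ) / 2) =
      (4 * Real.pi) ^ (-(d : ℝ) / 2) * a ^ (-(d : ℝ) / 2) :=
    Real.mul_rpow (by positivity) ha.le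
  calc heatKernel d a z
      ≤ (4 * Real.pi * a) ^ (-(d : ℝ) / 2) * Real.exp (-(R ^ 2) / (16 * a)) := by
        unfold heatKernel
        exact mul_le_mul_of_nonneg_left hexp (by positivity)
    _ = (4 * Real.pi) ^ (-(d : ℝ) / 2) *
          (a ^ (-(d : ℝ) / 2) * Real.exp (-(R ^ 2) / (16 * a))) := by
        rw [hsplit]; ring
    _ ≤ (4 * Real.pi) ^ (-(d : ℝ) / 2) *
          ((16 : ℝ) ^ ((d : ℝ) / 2) * ((d.factorial : ℝ) + 1) * R ^ (-(d : ℝ))) := by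
        exact mul_le_mul_of_nonneg_left (sigma_bound d ha hR) (by positivity)
    _ = (4 * Real.pi) ^ (-(d : ℝ) / 2) * (16 : ℝ) ^ ((d : ℝ) / 2) *
          ((d.factorial : ℝ) + 1) * R ^ (-(d : ℝ)) := by ring

lemma heatKernel_continuous (d : ℕ) (t : ℝ) :
    Continuous (fun x : EuclideanSpace ℝ (Fin d) => heatKernel d t x) := by
  unfold heatKernel
  fun_prop

/-- The heat kernel integrates to 1 over `ℝ^d`. -/
lemma heatKernel_integral (d : ℕ) {b : ℝ} (hb : 0 < b) :
    ∫ z : EuclideanSpace ℝ (Fin d), heatKernel d b z = 1 := by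
  have hπ : 0 < Real.pi := Real.pi_pos
  have h4b : (0:ℝ) < 1 / (4 * b) := by positivity
  have hform : ∀ z : EuclideanSpace ℝ (Fin d),
      heatKernel d b z = (4 * Real.pi * b) ^ (-(d : ℝ) / 2) *
        Real.exp (-(1 / (4 * b)) * ‖z‖ ^ 2) := by
    intro z
    unfold heatKernel
    congr 1
    congr 1
    field_simp
  simp_rw [hform]
  rw [integral_const_mul, GaussianFourier.integral_rexp_neg_mul_sq_norm h4b]
  have hrank : (Module.finrank ℝ (EuclideanSpace ℝ (Fin d)) : ℝ) = (d : ℝ) := by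
    simp [finrank_euclideanSpace_fin]
  rw [hrank]
  have harg : Real.pi / (1 / (4 * b)) = 4 * Real.pi * b := by
    field_simp
  rw [harg, ← Real.rpow_add (by positivity), neg_div, neg_add_cancel, Real.rpow_zero]

lemma heatKernel_integrable (d : ℕ) {b : ℝ} (hb : 0 < b) :
    Integrable (fun z : EuclideanSpace ℝ (Fin d) => heatKernel d b z) := by
  have h4b : (0:ℝ) < ((1 / (4 * b) : ℝ) : ℂ).re := by
    simp; positivity
  have hC := GaussianFourier.integrable_cexp_neg_mul_sq_norm_add
    (V := EuclideanSpace ℝ (Fin d)) h4b 0 0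
  have hR : Integrable (fun z : EuclideanSpace ℝ (Fin d) =>
      Real.exp (-(1 / (4 * b)) * ‖z‖ ^ 2)) := by
    have := hC.norm
    convert this using 2 with z
    rw [Complex.norm_exp]
    congr 1
    simp [Complex.add_re, Complex.mul_re]
    left
    rw [← Complex.ofReal_pow, Complex.ofReal_re]
  have : (fun z : EuclideanSpace ℝ (Fin d) => heatKernel d b z) =
      fun z => (4 * Real.pi * b) ^ (-(d : ℝ) / 2) *
        Real.exp (-(1 / (4 * b)) * ‖z‖ ^ 2) := by
    funext z
    unfold heatKernel
    congr 1
    congr 1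
    field_simp
  rw [this]
  exact hR.const_mul _

/-- Gaussian off-diagonal estimate: there is a constant `c_d < ∞`, depending only
on `d`, such that for all `R > 0`, all `x` with `|x| = R`, and all `a, b > 0`,
`∫_{B_{R/2}(0)} q_a(x−y) q_b(y−x) dy ≤ c_d · R^{−d}`. -/
theorem heat_offdiagonal_ball_bound (d : ℕ) (hd : 1 ≤ d) :
    ∃ c : ℝ, ∀ R : ℝ, 0 < R → ∀ x : EuclideanSpace ℝ (Fin d), ‖x‖ = R →
      ∀ a b : ℝ, 0 < a → 0 < b →
        ∫⁻ y in Metric.ball (0 : EuclideanSpace ℝ (Fin d)) (R / 2),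
            ENNReal.ofReal (heatKernel d a (x - y) * heatKernel d b (y - x)) ≤
          ENNReal.ofReal (c * R ^ (-(d : ℝ))) := by
  set C : ℝ := (4 * Real.pi) ^ (-(d : ℝ) / 2) * (16 : ℝ) ^ ((d : ℝ) / 2) *
    ((d.factorial : ℝ) + 1) with hC_def
  have hπ : 0 < Real.pi := Real.pi_pos
  have hC_pos : 0 < C := by
    rw [hC_def]
    positivity
  refine ⟨C, fun R hR x hx a b ha hb => ?_⟩
  have hbound : ∀ y ∈ Metric.ball (0 : EuclideanSpace ℝ (Fin d)) (R / 2),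
      ENNReal.ofReal (heatKernel d a (x - y) * heatKernel d b (y - x)) ≤
        ENNReal.ofReal (C * R ^ (-(d : ℝ))) * ENNReal.ofReal (heatKernel d b (y - x)) := by
    intro y hy
    rw [← ENNReal.ofReal_mul (by positivity)]
    apply ENNReal.ofReal_le_ofReal
    have hzy : R / 2 ≤ ‖x - y‖ := by
      have h1 : ‖y‖ < R / 2 := by simpa using hy
      calc R / 2 = R - R / 2 := by ring
        _ ≤ ‖x‖ - ‖y‖ := by rw [hx]; linarith
        _ ≤ ‖x - y‖ := norm_sub_norm_le x y
    have h1 := heatKernel_le d ha hR hzy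
    exact mul_le_mul_of_nonneg_right (by rw [hC_def]; exact h1)
      (heatKernel_nonneg d hb (y - x))
  have hmeas : Measurable (fun y : EuclideanSpace ℝ (Fin d) =>
      ENNReal.ofReal (C * R ^ (-(d : ℝ))) * ENNReal.ofReal (heatKernel d b (y - x))) := by
    apply Measurable.const_mul
    exact (ENNReal.measurable_ofReal.comp
      ((heatKernel_continuous d b).measurable.comp (measurable_id.sub_const x)))
  calc ∫⁻ y in Metric.ball (0 : EuclideanSpace ℝ (Fin d)) (R / 2),
        ENNReal.ofReal (heatKernel d a (x - y) * heatKernel d b (y - x))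
      ≤ ∫⁻ y in Metric.ball (0 : EuclideanSpace ℝ (Fin d)) (R / 2),
          ENNReal.ofReal (C * R ^ (-(d : ℝ))) * ENNReal.ofReal (heatKernel d b (y - x)) :=
        setLIntegral_mono hmeas hbound
    _ = ENNReal.ofReal (C * R ^ (-(d : ℝ))) *
          ∫⁻ y in Metric.ball (0 : EuclideanSpace ℝ (Fin d)) (R / 2),
            ENNReal.ofReal (heatKernel d b (y - x)) :=
        lintegral_const_mul' _ _ ENNReal.ofReal_ne_top
    _ ≤ ENNReal.ofReal (C * R ^ (-(d : ℝ))) *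
          ∫⁻ y : EuclideanSpace ℝ (Fin d), ENNReal.ofReal (heatKernel d b (y - x)) :=
        mul_le_mul_right (setLIntegral_le_lintegral _ _) _
    _ = ENNReal.ofReal (C * R ^ (-(d : ℝ))) := by
        have hint : Integrable (fun y : EuclideanSpace ℝ (Fin d) => heatKernel d b (y - x)) :=
          (heatKernel_integrable d hb).comp_sub_right x
        rw [← ofReal_integral_eq_lintegral_ofReal hint
          (Filter.Eventually.of_forall fun y => heatKernel_nonneg d hb (y - x))]
        rw [integral_sub_right_eq_self (fun z => heatKernel d b z) x, heatKernel_integral d hb]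
        simp
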